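/- arXiv:1209.1644 — 3 statements merged into one kernel-verified Lean document; each statement's English description precedes it below -/
import Mathlib

section
/- For γ ∈ (0, 1/2) and every real x, ∫₀^∞ min(|x·γ t^{γ−1}|, |x·γ t^{γ−1}|²) dt = C·|x|^{1/(1−γ)}, where C = γ^{1/(1−γ)}·(γ^{−1} + (1−2γ)^{−1}). -/
/-!
With `a = |x| γ` and `p = γ - 1`, the integrand is `min (a t^p) ((a t^p)²)`. The substitution
`s = a^{1/p} t` turns `a t^p` into `s^p` and pulls out the factor `a^{-1/p} = a^{1/(1-γ)}`.
What remains is `∫₀^∞ min (s^p, s^{2p}) ds`, which equals `∫₀^1 s^p + ∫₁^∞ s^{2p}`; it is finite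
exactly because `-1 < p < -1/2`, i.e. `0 < γ < 1/2`.
-/

open MeasureTheory Set Real

theorem integral_Ioi_min_rpow_rpow {p q : ℝ} (hp : -1 < p) (hq : q < -1) :
    ∫ s in Ioi (0:ℝ), min (s ^ p) (s ^ q) = 1 / (p + 1) - 1 / (q + 1) := by
  have hqp : q ≤ p := by linarith
  have h_small : EqOn (fun s : ℝ => min (s ^ p) (s ^ q)) (fun s => s ^ p) (Ioc 0 1) :=
    fun s hs => min_eq_left (rpow_le_rpow_of_exponent_ge hs.1 hs.2 hqp)
  have h_large : EqOn (fun s : ℝ => min (s ^ p) (s ^ q)) (fun s => s ^ q) (Ioi 1) :=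
    fun s hs => min_eq_right (rpow_le_rpow_of_exponent_le (le_of_lt hs) hqp)
  have hint_small : IntegrableOn (fun s : ℝ => s ^ p) (Ioc 0 1) :=
    (intervalIntegrable_iff_integrableOn_Ioc_of_le zero_le_one).mp
      (intervalIntegral.intervalIntegrable_rpow' hp)
  have hint_large : IntegrableOn (fun s : ℝ => s ^ q) (Ioi 1) :=
    integrableOn_Ioi_rpow_of_lt hq one_pos
  rw [← Ioc_union_Ioi_eq_Ioi zero_le_one,
    setIntegral_union (Ioc_disjoint_Ioi le_rfl) measurableSet_Ioi
      (hint_small.congr_fun h_small.symm measurableSet_Ioc)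
      (hint_large.congr_fun h_large.symm measurableSet_Ioi),
    setIntegral_congr_fun measurableSet_Ioc h_small,
    setIntegral_congr_fun measurableSet_Ioi h_large,
    ← intervalIntegral.integral_of_le zero_le_one, integral_rpow (Or.inl hp),
    integral_Ioi_rpow_of_lt hq one_pos, zero_rpow (by linarith), one_rpow, one_rpow]
  ring

theorem integral_Ioi_min_mul_rpow_sq {a p : ℝ} (ha : 0 ≤ a) (hp : -1 < p) (hp' : p < -1 / 2) :
    ∫ t in Ioi (0:ℝ), min (a * t ^ p) ((a * t ^ p) ^ 2) =
      a ^ (-p⁻¹) * (1 / (p + 1) - 1 / (2 * p + 1)) := by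
  rcases ha.eq_or_lt with rfl | ha
  · simp [zero_rpow (neg_ne_zero.mpr (inv_ne_zero (by linarith : p ≠ 0)))]
  set b := a ^ p⁻¹
  have hb : 0 < b := rpow_pos_of_pos ha _
  have hkernel : ∀ t : ℝ, 0 ≤ t → a * t ^ p = (t * b) ^ p := fun t ht => by
    rw [mul_rpow ht hb.le, ← rpow_mul ha.le, inv_mul_cancel₀ (by linarith), rpow_one, mul_comm]
  calc ∫ t in Ioi (0:ℝ), min (a * t ^ p) ((a * t ^ p) ^ 2)
      = ∫ t in Ioi (0:ℝ), min ((t * b) ^ p) ((t * b) ^ (2 * p)) :=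
        setIntegral_congr_fun measurableSet_Ioi fun t ht => by
          rw [hkernel t (le_of_lt ht), ← rpow_mul_natCast (mul_nonneg (le_of_lt ht) hb.le),
            Nat.cast_ofNat, mul_comm p]
    _ = b⁻¹ • ∫ s in Ioi (0:ℝ), min (s ^ p) (s ^ (2 * p)) := by
        rw [integral_comp_mul_right_Ioi (fun s => min (s ^ p) (s ^ (2 * p))) 0 hb, zero_mul]
    _ = a ^ (-p⁻¹) * (1 / (p + 1) - 1 / (2 * p + 1)) := by
        rw [integral_Ioi_min_rpow_rpow hp (by linarith), smul_eq_mul, rpow_neg ha.le]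

/-- For `γ ∈ (0,1/2)` and every real `x`,
`∫₀^∞ min(|x·γ t^{γ−1}|, |x·γ t^{γ−1}|²) dt = C·|x|^{1/(1−γ)}`
with `C = γ^{1/(1−γ)}·(γ⁻¹ + (1−2γ)⁻¹)`. -/
theorem fractional_kernel_integral (γ : ℝ) (hγ0 : 0 < γ) (hγ : γ < 1/2) (x : ℝ) :
    ∫ t in Set.Ioi (0:ℝ), min |x * (γ * t ^ (γ - 1))| (|x * (γ * t ^ (γ - 1))| ^ 2) =
      (γ ^ (1 / (1 - γ)) * (γ⁻¹ + (1 - 2*γ)⁻¹)) * |x| ^ (1 / (1 - γ)) := by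
  have hkernel : ∀ t ∈ Ioi (0:ℝ), |x * (γ * t ^ (γ - 1))| = |x| * γ * t ^ (γ - 1) :=
    fun t ht => by
      rw [abs_mul, abs_mul, abs_of_pos hγ0, abs_of_pos (rpow_pos_of_pos ht _), mul_assoc]
  have hexp : -(γ - 1)⁻¹ = 1 / (1 - γ) := by rw [← inv_neg, neg_sub, one_div]
  have hcoeff : 1 / (γ - 1 + 1) - 1 / (2 * (γ - 1) + 1) = γ⁻¹ + (1 - 2 * γ)⁻¹ := by
    rw [show γ - 1 + 1 = γ by ring, show 2 * (γ - 1) + 1 = -(1 - 2 * γ) by ring, one_div,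
      one_div, inv_neg, sub_neg_eq_add]
  rw [setIntegral_congr_fun measurableSet_Ioi fun t ht => by rw [hkernel t ht],
    integral_Ioi_min_mul_rpow_sq (by positivity) (by linarith) (by linarith), hexp, hcoeff,
    mul_rpow (abs_nonneg x) hγ0.le]
  ring
end

section
/- Let γ ∈ (0,1) and let ρ be a Borel measure on ℝ such that ∫_{−∞}^{0} ∫_ℝ min(1, |((1−s)^γ − (−s)^γ)x|²) ρ(dx) ds < ∞. Then ∫_{|γx|>1} (|γx|^{1/(1−γ)} − 1) ρ(dx) < ∞; in particular ∫_{|x|>1} |x|^{1/(1−γ)} ρ(dx) < ∞. -/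
open MeasureTheory Set
open scoped ENNReal

/-!
Write `f(s) = (1 - s)^γ - (-s)^γ`. Concavity of `u ↦ u^γ` gives `f(s) ≥ γ (1 - s)^(γ - 1) > 0`,
so `|f(s) x| ≥ 1` as soon as `1 - s ≤ |γ x|^(1/(1-γ))`, and the `s`-integral of the
integrand is at least `|γ x|^(1/(1-γ)) - 1`. To integrate this in `x` we need Tonelli, but `ρ`
is arbitrary; however `f > 0` bounds the integrand below on `{|x| > 1}` by a positive constant
for each `s`, which forces `ρ {|x| > 1} < ∞`, and on that set Tonelli applies. The second bound
follows from `|x|^(1/(1-γ)) = γ^(-1/(1-γ)) |γ x|^(1/(1-γ))`.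
-/

lemma mul_rpow_sub_one_le_rpow_one_sub_sub_rpow_neg {γ : ℝ} (hγ0 : 0 ≤ γ) (hγ1 : γ ≤ 1)
    {s : ℝ} (hs : s ≤ 0) : γ * (1 - s) ^ (γ - 1) ≤ (1 - s) ^ γ - (-s) ^ γ := by
  have hslope := (Real.concaveOn_rpow hγ0 hγ1).le_slope_of_hasDerivAt
    (mem_Ici.2 (neg_nonneg.2 hs)) (mem_Ici.2 (by linarith : (0 : ℝ) ≤ 1 - s))
    (by linarith : -s < 1 - s) (Real.hasDerivAt_rpow_const (Or.inl (by linarith)))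
  simpa [slope_def_field] using hslope

lemma rpow_one_sub_sub_rpow_neg_pos {γ : ℝ} (hγ0 : 0 < γ) (hγ1 : γ ≤ 1) {s : ℝ}
    (hs : s ≤ 0) : 0 < (1 - s) ^ γ - (-s) ^ γ :=
  (mul_pos hγ0 (Real.rpow_pos_of_pos (by linarith) _)).trans_le
    (mul_rpow_sub_one_le_rpow_one_sub_sub_rpow_neg hγ0.le hγ1 hs)

lemma one_le_abs_rpow_one_sub_sub_rpow_neg_mul {γ : ℝ} (hγ0 : 0 < γ) (hγ1 : γ < 1)
    {s x : ℝ} (hs : s ≤ 0) (hsx : 1 - s ≤ |γ * x| ^ (1 / (1 - γ))) :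
    1 ≤ |((1 - s) ^ γ - (-s) ^ γ) * x| := by
  have h1s : 0 < 1 - s := by linarith
  have hpow : (1 - s) ^ (1 - γ) ≤ γ * |x| := by
    calc (1 - s) ^ (1 - γ) ≤ (|γ * x| ^ (1 / (1 - γ))) ^ (1 - γ) :=
          Real.rpow_le_rpow h1s.le hsx (by linarith)
      _ = γ * |x| := by
          rw [← Real.rpow_mul (abs_nonneg _), one_div_mul_cancel (by linarith), Real.rpow_one,
            abs_mul, abs_of_pos hγ0]
  have htangent : 1 ≤ γ * (1 - s) ^ (γ - 1) * |x| := by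
    rw [show γ - 1 = -(1 - γ) by ring, Real.rpow_neg h1s.le, mul_right_comm,
      ← div_eq_mul_inv, one_le_div (Real.rpow_pos_of_pos h1s _)]
    exact hpow
  rw [abs_mul, abs_of_pos (rpow_one_sub_sub_rpow_neg_pos hγ0 hγ1.le hs)]
  exact htangent.trans (mul_le_mul_of_nonneg_right
    (mul_rpow_sub_one_le_rpow_one_sub_sub_rpow_neg hγ0.le hγ1.le hs) (abs_nonneg x))

lemma ofReal_abs_mul_rpow_sub_one_le_lintegral {γ : ℝ} (hγ0 : 0 < γ) (hγ1 : γ < 1)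
    (x : ℝ) :
    ENNReal.ofReal (|γ * x| ^ (1 / (1 - γ)) - 1) ≤
      ∫⁻ s in Iic 0, ENNReal.ofReal (min 1 (|((1 - s) ^ γ - (-s) ^ γ) * x| ^ 2)) := by
  set T := |γ * x| ^ (1 / (1 - γ))
  calc ENNReal.ofReal (T - 1) = ∫⁻ _ in Icc (1 - T) 0, 1 := by
        rw [setLIntegral_one, Real.volume_Icc, zero_sub, neg_sub]
    _ ≤ ∫⁻ s in Icc (1 - T) 0,
          ENNReal.ofReal (min 1 (|((1 - s) ^ γ - (-s) ^ γ) * x| ^ 2)) := by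
        refine setLIntegral_mono' measurableSet_Icc fun s hs => ?_
        have h1 := one_le_abs_rpow_one_sub_sub_rpow_neg_mul hγ0 hγ1 hs.2 (sub_le_comm.1 hs.1)
        rw [min_eq_left (one_le_pow₀ h1), ENNReal.ofReal_one]
    _ ≤ _ := lintegral_mono_set fun s hs => hs.2

lemma mul_measure_one_lt_abs_le_lintegral (ρ : Measure ℝ) (c : ℝ) :
    ENNReal.ofReal (min 1 (c ^ 2)) * ρ {x | 1 < |x|} ≤
      ∫⁻ x, ENNReal.ofReal (min 1 (|c * x| ^ 2)) ∂ρ := by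
  rw [← setLIntegral_const]
  refine le_trans (setLIntegral_mono' (measurableSet_lt measurable_const measurable_id.abs)
    fun x hx => ENNReal.ofReal_le_ofReal (min_le_min le_rfl ?_)) (setLIntegral_le_lintegral _ _)
  rw [abs_mul, mul_pow, sq_abs]
  exact le_mul_of_one_le_right (sq_nonneg c) (one_le_pow₀ (le_of_lt hx))

lemma measure_one_lt_abs_lt_top {γ : ℝ} (hγ0 : 0 < γ) (hγ1 : γ ≤ 1) (ρ : Measure ℝ)
    (h : ∫⁻ s in Iic 0,
      ∫⁻ x, ENNReal.ofReal (min 1 (|((1 - s) ^ γ - (-s) ^ γ) * x| ^ 2)) ∂ρ < ⊤) :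
    ρ {x | 1 < |x|} < ⊤ := by
  refine lt_top_iff_ne_top.2 fun hρ => h.ne ?_
  have hinner : EqOn (fun s => ∫⁻ x, ENNReal.ofReal
      (min 1 (|((1 - s) ^ γ - (-s) ^ γ) * x| ^ 2)) ∂ρ) (fun _ => ⊤) (Iic 0) := fun s hs => by
    refine top_unique ((mul_measure_one_lt_abs_le_lintegral ρ _).trans' ?_)
    have hf := rpow_one_sub_sub_rpow_neg_pos hγ0 hγ1 hs
    rw [hρ, ENNReal.mul_top (by simp only [ne_eq, ENNReal.ofReal_eq_zero, not_le]; positivity)]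
  rw [setLIntegral_congr_fun measurableSet_Iic hinner, setLIntegral_const, Real.volume_Iic,
    ENNReal.top_mul_top]

lemma setLIntegral_lintegral_le_lintegral_lintegral {α β : Type*} [MeasurableSpace α]
    [MeasurableSpace β] {μ : Measure α} [SFinite μ] {ν : Measure β} {S : Set β}
    (hS : ν S ≠ ⊤) {F : α → β → ℝ≥0∞} (hF : Measurable (Function.uncurry F)) :
    ∫⁻ y in S, ∫⁻ x, F x y ∂μ ∂ν ≤ ∫⁻ x, ∫⁻ y, F x y ∂ν ∂μ := by
  have : IsFiniteMeasure (ν.restrict S) := isFiniteMeasure_restrict.2 hS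
  rw [← lintegral_lintegral_swap hF.aemeasurable]
  exact lintegral_mono fun x => lintegral_mono' Measure.restrict_le_self le_rfl

lemma ofReal_abs_rpow_le {γ : ℝ} (hγ0 : 0 < γ) (p x : ℝ) :
    ENNReal.ofReal (|x| ^ p) ≤
      ENNReal.ofReal (γ ^ (-p)) * (ENNReal.ofReal (|γ * x| ^ p - 1) + 1) := by
  have hx : |x| ^ p = γ ^ (-p) * |γ * x| ^ p := by
    rw [abs_mul, abs_of_pos hγ0, Real.mul_rpow hγ0.le (abs_nonneg x), ← mul_assoc,
      ← Real.rpow_add hγ0, neg_add_cancel, Real.rpow_zero, one_mul]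
  rw [hx, ENNReal.ofReal_mul (Real.rpow_nonneg hγ0.le _)]
  gcongr
  simpa using ENNReal.ofReal_add_le (p := |γ * x| ^ p - 1) (q := 1)

/-- If `γ ∈ (0,1)` and `∫_{−∞}^0 ∫_ℝ min(1, |((1−s)^γ − (−s)^γ)x|²) ρ(dx) ds < ∞`, then
`∫_{|γx|>1} (|γx|^{1/(1−γ)} − 1) ρ(dx) < ∞` and `∫_{|x|>1} |x|^{1/(1−γ)} ρ(dx) < ∞`. -/
theorem tail_moment_from_welldefinedness (γ : ℝ) (hγ0 : 0 < γ) (hγ1 : γ < 1)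
    (ρ : Measure ℝ)
    (h : ∫⁻ s in Set.Iic (0:ℝ),
          ∫⁻ x, ENNReal.ofReal
            (min 1 (|((1 - s) ^ γ - (-s) ^ γ) * x| ^ 2)) ∂ρ < ⊤) :
    (∫⁻ x in {x : ℝ | 1 < |γ * x|},
        ENNReal.ofReal (|γ * x| ^ (1 / (1 - γ)) - 1) ∂ρ < ⊤) ∧
    (∫⁻ x in {x : ℝ | 1 < |x|},
        ENNReal.ofReal (|x| ^ (1 / (1 - γ))) ∂ρ < ⊤) := by
  set p := 1 / (1 - γ)
  set S := {x : ℝ | 1 < |x|}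
  have hρ : ρ S < ⊤ := measure_one_lt_abs_lt_top hγ0 hγ1.le ρ h
  have htail : ∫⁻ x in S, ENNReal.ofReal (|γ * x| ^ p - 1) ∂ρ < ⊤ :=
    calc ∫⁻ x in S, ENNReal.ofReal (|γ * x| ^ p - 1) ∂ρ
        ≤ ∫⁻ x in S, (∫⁻ s in Iic 0,
          ENNReal.ofReal (min 1 (|((1 - s) ^ γ - (-s) ^ γ) * x| ^ 2))) ∂ρ :=
          lintegral_mono (ofReal_abs_mul_rpow_sub_one_le_lintegral hγ0 hγ1)
      _ ≤ _ := setLIntegral_lintegral_le_lintegral_lintegral hρ.ne (by fun_prop)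
      _ < ⊤ := h
  have hsub : {x : ℝ | 1 < |γ * x|} ⊆ S := fun x (hx : 1 < |γ * x|) =>
    hx.trans_le <| by
      rw [abs_mul, abs_of_pos hγ0]; exact mul_le_of_le_one_left (abs_nonneg x) hγ1.le
  refine ⟨(lintegral_mono_set hsub).trans_lt htail, ?_⟩
  calc ∫⁻ x in S, ENNReal.ofReal (|x| ^ p) ∂ρ
      ≤ ∫⁻ x in S, ENNReal.ofReal (γ ^ (-p)) * (ENNReal.ofReal (|γ * x| ^ p - 1) + 1) ∂ρ :=
        lintegral_mono (ofReal_abs_rpow_le hγ0 p)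
    _ = ENNReal.ofReal (γ ^ (-p)) *
          (∫⁻ x in S, ENNReal.ofReal (|γ * x| ^ p - 1) ∂ρ + ρ S) := by
        rw [lintegral_const_mul' _ _ ENNReal.ofReal_ne_top,
          lintegral_add_right _ measurable_const, setLIntegral_one]
    _ < ⊤ := ENNReal.mul_lt_top ENNReal.ofReal_lt_top (ENNReal.add_lt_top.2 ⟨htail, hρ⟩)
end

section
/- Fix γ ∈ (0, 1/2). There exist finite constants c, c̃ > 0, independent of v and x, such that for all x ∈ ℝ, c·|x|^{1/(1−γ)}/(1/2 − γ) ≤ ∫₀^∞ min(|x·γ t^{γ−1}|, |x·γ t^{γ−1}|²) dt ≤ c̃·|x|^{1/(1−γ)}/(1/2 − γ). -/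
/-!
With `a = |x| γ`, the integrand is `a t^(γ-1)` below the crossover point `t₀ = a^(1/(1-γ))`,
where `a t₀^(γ-1) = 1`, and its square `a² t^(2γ-2)` above it. Integrating the two pieces gives
exactly `t₀ (1/γ + 1/(1-2γ))`, i.e. `|x|^(1/(1-γ))` times
`γ^(1/(1-γ)) (1/γ + 1/(1-2γ)) = γ^(γ/(1-γ)) (1-γ)/(1-2γ)`. Finally
`e⁻¹ ≤ γ^(γ/(1-γ)) ≤ 1`, the lower bound being `γ log γ ≥ γ - 1`.
-/

open MeasureTheory Real Set

section MinSq

variable {α : Type*} [Semiring α] [LinearOrder α] [IsStrictOrderedRing α] {u : α}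

theorem min_self_sq_of_one_le (hu : 1 ≤ u) : min u (u ^ 2) = u :=
  min_eq_left (le_self_pow₀ hu two_ne_zero)

theorem min_self_sq_of_le_one (h0 : 0 ≤ u) (h1 : u ≤ 1) : min u (u ^ 2) = u ^ 2 :=
  min_eq_right (pow_le_of_le_one h0 h1 two_ne_zero)

end MinSq

theorem mul_rpow_one_div_one_sub_rpow_sub_one {a γ : ℝ} (ha : 0 < a) (hγ : γ < 1) :
    a * (a ^ (1 / (1 - γ))) ^ (γ - 1) = 1 := by
  have : 1 - γ ≠ 0 := by linarith
  rw [← rpow_mul ha.le, show 1 / (1 - γ) * (γ - 1) = -1 by field_simp; ring, rpow_neg_one,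
    mul_inv_cancel₀ ha.ne']

section Crossover

variable {a γ t₀ : ℝ} (ht₀ : 0 < t₀) (hcross : a * t₀ ^ (γ - 1) = 1)
include ht₀ hcross

theorem setIntegral_Ioc_min_mul_rpow_sq (ha : 0 ≤ a) (hγ0 : 0 < γ) (hγ1 : γ < 1) :
    ∫ t in Ioc 0 t₀, min (a * t ^ (γ - 1)) ((a * t ^ (γ - 1)) ^ 2) = t₀ / γ := by
  have hlin : EqOn (fun t ↦ min (a * t ^ (γ - 1)) ((a * t ^ (γ - 1)) ^ 2))
      (fun t ↦ a * t ^ (γ - 1)) (Ioc 0 t₀) := fun t ht ↦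
    min_self_sq_of_one_le <| hcross.symm.trans_le <|
      mul_le_mul_of_nonneg_left (rpow_le_rpow_of_nonpos ht.1 ht.2 (by linarith)) ha
  have hself : a * t₀ ^ γ = t₀ := by
    rw [← sub_add_cancel γ 1, rpow_add_one ht₀.ne', ← mul_assoc, hcross, one_mul]
  rw [setIntegral_congr_fun measurableSet_Ioc hlin, ← intervalIntegral.integral_of_le ht₀.le,
    intervalIntegral.integral_const_mul, integral_rpow (Or.inl (by linarith)),
    zero_rpow (by linarith), sub_add_cancel, sub_zero, mul_div_assoc', hself]

theorem setIntegral_Ioi_min_mul_rpow_sq (ha : 0 ≤ a) (hγ : γ < 1 / 2) :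
    ∫ t in Ioi t₀, min (a * t ^ (γ - 1)) ((a * t ^ (γ - 1)) ^ 2) = t₀ / (1 - 2 * γ) := by
  have hsq : EqOn (fun t ↦ min (a * t ^ (γ - 1)) ((a * t ^ (γ - 1)) ^ 2))
      (fun t ↦ a ^ 2 * t ^ (2 * γ - 2)) (Ioi t₀) := fun t ht ↦ by
    have ht0 : 0 < t := ht₀.trans ht
    have hle : a * t ^ (γ - 1) ≤ 1 :=
      (mul_le_mul_of_nonneg_left (rpow_le_rpow_of_nonpos ht₀ ht.le (by linarith)) ha).trans_eq
        hcross
    dsimp only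
    rw [min_self_sq_of_le_one (by positivity) hle, mul_pow, ← rpow_mul_natCast ht0.le]
    ring_nf
  have hself : a ^ 2 * t₀ ^ (2 * γ - 2 + 1) = t₀ := by
    rw [show 2 * γ - 2 + 1 = (γ - 1) + (γ - 1) + 1 by ring, rpow_add_one ht₀.ne',
      rpow_add ht₀]
    linear_combination t₀ * (a * t₀ ^ (γ - 1) + 1) * hcross
  rw [setIntegral_congr_fun measurableSet_Ioi hsq, integral_const_mul,
    integral_Ioi_rpow_of_lt (by linarith) ht₀, mul_div_assoc', mul_neg, hself,
    show 2 * γ - 2 + 1 = -(1 - 2 * γ) by ring, neg_div_neg_eq]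

end Crossover

theorem setIntegral_Ioi_zero_min_mul_rpow_sq {a γ : ℝ} (ha : 0 ≤ a) (hγ0 : 0 < γ)
    (hγ : γ < 1 / 2) :
    ∫ t in Ioi 0, min (a * t ^ (γ - 1)) ((a * t ^ (γ - 1)) ^ 2) =
      a ^ (1 / (1 - γ)) * (1 / γ + 1 / (1 - 2 * γ)) := by
  have hp : 1 / (1 - γ) ≠ 0 := by
    have : 0 < 1 - γ := by linarith
    positivity
  rcases ha.eq_or_lt with rfl | ha
  · rw [zero_rpow hp]
    simp
  set t₀ := a ^ (1 / (1 - γ))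
  have ht₀ : 0 < t₀ := rpow_pos_of_pos ha _
  have hcross : a * t₀ ^ (γ - 1) = 1 := mul_rpow_one_div_one_sub_rpow_sub_one ha (by linarith)
  have hhead := setIntegral_Ioc_min_mul_rpow_sq ht₀ hcross ha.le hγ0 (by linarith)
  have htail := setIntegral_Ioi_min_mul_rpow_sq ht₀ hcross ha.le hγ
  have h2γ : 0 < 1 - 2 * γ := by linarith
  rw [← Ioc_union_Ioi_eq_Ioi ht₀.le,
    setIntegral_union (Ioc_disjoint_Ioi le_rfl) measurableSet_Ioi
    (.of_integral_ne_zero (by rw [hhead]; positivity))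
    (.of_integral_ne_zero (by rw [htail]; positivity)), hhead, htail]
  ring

noncomputable def fractionalKernelConstant (γ : ℝ) : ℝ :=
  γ ^ (1 / (1 - γ)) * (1 / γ + 1 / (1 - 2 * γ))

theorem setIntegral_Ioi_zero_min_abs_mul_rpow_sq (x : ℝ) {γ : ℝ} (hγ0 : 0 < γ)
    (hγ : γ < 1 / 2) :
    ∫ t in Ioi 0, min |x * (γ * t ^ (γ - 1))| (|x * (γ * t ^ (γ - 1))| ^ 2) =
      |x| ^ (1 / (1 - γ)) * fractionalKernelConstant γ := by
  have hcongr : EqOn (fun t ↦ min |x * (γ * t ^ (γ - 1))| (|x * (γ * t ^ (γ - 1))| ^ 2))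
      (fun t ↦ min (|x| * γ * t ^ (γ - 1)) ((|x| * γ * t ^ (γ - 1)) ^ 2)) (Ioi 0) := by
    intro t ht
    have habs : |x * (γ * t ^ (γ - 1))| = |x| * γ * t ^ (γ - 1) := by
      rw [abs_mul, abs_of_pos (mul_pos hγ0 (rpow_pos_of_pos ht _)), mul_assoc]
    simp only [habs]
  rw [setIntegral_congr_fun measurableSet_Ioi hcongr,
    setIntegral_Ioi_zero_min_mul_rpow_sq (by positivity) hγ0 hγ, mul_rpow (abs_nonneg x) hγ0.le,
    fractionalKernelConstant, mul_assoc]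

theorem fractionalKernelConstant_eq {γ : ℝ} (hγ0 : 0 < γ) (hγ : γ < 1 / 2) :
    fractionalKernelConstant γ = γ ^ (γ / (1 - γ)) * ((1 - γ) / 2) / (1 / 2 - γ) := by
  have h1 : 1 - γ ≠ 0 := by linarith
  have h2 : 1 - 2 * γ ≠ 0 := by linarith
  have hexp : 1 / (1 - γ) = 1 + γ / (1 - γ) := by rw [one_add_div h1, sub_add_cancel]
  rw [fractionalKernelConstant, hexp, rpow_add hγ0, rpow_one, div_add_div _ _ hγ0.ne' h2,
    show (1 : ℝ) / 2 - γ = (1 - 2 * γ) / 2 by ring]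
  field_simp
  ring

theorem exp_neg_one_le_rpow_div_one_sub_self {γ : ℝ} (hγ0 : 0 < γ) (hγ1 : γ < 1) :
    exp (-1) ≤ γ ^ (γ / (1 - γ)) := by
  rw [rpow_def_of_pos hγ0, exp_le_exp, mul_div_assoc', le_div_iff₀ (by linarith)]
  linarith [self_sub_one_le_mul_log hγ0.le]

theorem exp_neg_one_div_four_div_le_fractionalKernelConstant {γ : ℝ} (hγ0 : 0 < γ)
    (hγ : γ < 1 / 2) :
    exp (-1) / 4 / (1 / 2 - γ) ≤ fractionalKernelConstant γ := by
  rw [fractionalKernelConstant_eq hγ0 hγ]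
  gcongr
  calc exp (-1) / 4 = exp (-1) * (1 / 4) := by ring
    _ ≤ γ ^ (γ / (1 - γ)) * ((1 - γ) / 2) :=
      mul_le_mul (exp_neg_one_le_rpow_div_one_sub_self hγ0 (by linarith)) (by linarith)
        (by norm_num) (by positivity)

theorem fractionalKernelConstant_le {γ : ℝ} (hγ0 : 0 < γ) (hγ : γ < 1 / 2) :
    fractionalKernelConstant γ ≤ 1 / 2 / (1 / 2 - γ) := by
  rw [fractionalKernelConstant_eq hγ0 hγ]
  gcongr
  exact (mul_le_mul (rpow_le_one hγ0.le (by linarith) (div_nonneg hγ0.le (by linarith)))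
    (by linarith : (1 - γ) / 2 ≤ 1 / 2) (by linarith) zero_le_one).trans_eq (one_mul _)

/-- There exist constants `c, c̃ > 0`, independent of `γ` and `x`, such that for all
`γ ∈ (0,1/2)` and all `x ∈ ℝ`,
`c·|x|^{1/(1−γ)}/(1/2−γ) ≤ ∫₀^∞ min(|xγt^{γ−1}|, |xγt^{γ−1}|²) dt ≤ c̃·|x|^{1/(1−γ)}/(1/2−γ)`. -/
theorem fractional_kernel_two_sided_bound :
    ∃ c c2 : ℝ, 0 < c ∧ 0 < c2 ∧
      ∀ γ : ℝ, 0 < γ → γ < 1/2 → ∀ x : ℝ,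
        c * |x| ^ (1 / (1 - γ)) / (1/2 - γ) ≤
          (∫ t in Set.Ioi (0:ℝ),
            min |x * (γ * t ^ (γ - 1))| (|x * (γ * t ^ (γ - 1))| ^ 2)) ∧
        (∫ t in Set.Ioi (0:ℝ),
            min |x * (γ * t ^ (γ - 1))| (|x * (γ * t ^ (γ - 1))| ^ 2)) ≤
          c2 * |x| ^ (1 / (1 - γ)) / (1/2 - γ) := by
  refine ⟨exp (-1) / 4, 1 / 2, by positivity, by norm_num, fun γ hγ0 hγ x ↦ ?_⟩
  have hx : 0 ≤ |x| ^ (1 / (1 - γ)) := by positivity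
  have hfactor (c : ℝ) : c * |x| ^ (1 / (1 - γ)) / (1 / 2 - γ) =
      |x| ^ (1 / (1 - γ)) * (c / (1 / 2 - γ)) := by ring
  rw [setIntegral_Ioi_zero_min_abs_mul_rpow_sq x hγ0 hγ, hfactor, hfactor]
  exact ⟨mul_le_mul_of_nonneg_left
      (exp_neg_one_div_four_div_le_fractionalKernelConstant hγ0 hγ) hx,
    mul_le_mul_of_nonneg_left (fractionalKernelConstant_le hγ0 hγ) hx⟩
end
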